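/- Let v ∈ (ℂ*)^n and let g_0, …, g_n be the n+1 affine polynomials associated to v as in Nisse's construction. If w ∈ ℝ^n and w ≠ Log(v), then there exists j ∈ {0, 1, …, n} such that w does not lie in the amoeba of g_j. -/

import Mathlib

open Finset

/-- The coordinatewise log-modulus map. -/
noncomputable def Log {n : ℕ} (z : Fin n → ℂ) : Fin n → ℝ :=
  fun k => Real.log (‖z k‖)

/-- The amoeba of a polynomial function on the complex torus:
the image under `Log` of its zero set in `(ℂ*)^n`. -/
noncomputable def amoeba {n : ℕ} (f : (Fin n → ℂ) → ℂ) : Set (Fin n → ℝ) :=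
  Log '' {z | (∀ k, z k ≠ 0) ∧ f z = 0}

/-- `‖v‖₀ = ∑ₖ |vₖ|`. -/
noncomputable def norm0 {n : ℕ} (v : Fin n → ℂ) : ℝ := ∑ k, ‖v k‖

/-- `g₀(z) = 1 - (1/‖v‖₀) ∑ₖ (|vₖ|/vₖ) zₖ`, the polynomial of Nisse's construction. -/
noncomputable def gzero {n : ℕ} (v : Fin n → ℂ) : (Fin n → ℂ) → ℂ :=
  fun z => 1 - (1 / (norm0 v : ℂ)) * ∑ k, ((‖v k‖ : ℂ) / v k) * z k

/-- `gⱼ(z) = 1 - ((1+‖v‖₀-|vⱼ|)/vⱼ) zⱼ + ∑_{k≠j} (|vₖ|/vₖ) zₖ`, for `1 ≤ j ≤ n`. -/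
noncomputable def gj {n : ℕ} (v : Fin n → ℂ) (j : Fin n) : (Fin n → ℂ) → ℂ :=
  fun z => 1 - (((1 + norm0 v - ‖v j‖ : ℝ) : ℂ) / v j) * z j
    + ∑ k ∈ Finset.univ.erase j, ((‖v k‖ : ℂ) / v k) * z k

/-- The family `g₀, g₁, …, gₙ` of the `n+1` affine polynomials associated to `v`. -/
noncomputable def gfam {n : ℕ} (v : Fin n → ℂ) : Fin (n + 1) → (Fin n → ℂ) → ℂ :=
  Fin.cases (gzero v) (gj v)

/-!
If `w` lies in every amoeba, pick zeros `z` of `g₀` and of each `gⱼ` with `|zₖ| = e^{wₖ}`, and put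
`N = ‖v‖₀`, `s = ∑ₖ e^{wₖ}`. The triangle inequality applied to `g₀(z) = 0` gives `N ≤ s`; applied to
`gⱼ(z) = 0` it gives `(1 + N) e^{wⱼ} ≤ |vⱼ| (1 + s)`. Summing the latter over `j` yields
`(1 + N) s ≤ N (1 + s)`, i.e. `s ≤ N`, so `s = N`; then `e^{wⱼ} ≤ |vⱼ|` for every `j` with equal sums,
hence `e^{wⱼ} = |vⱼ|` and `w = Log v`.
-/

theorem exists_norm_eq_exp_of_mem_amoeba {n : ℕ} {f : (Fin n → ℂ) → ℂ} {w : Fin n → ℝ}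
    (hw : w ∈ amoeba f) : ∃ z : Fin n → ℂ, f z = 0 ∧ ∀ k, ‖z k‖ = Real.exp (w k) := by
  obtain ⟨z, ⟨hz0, hfz⟩, rfl⟩ := hw
  exact ⟨z, hfz, fun k => (Real.exp_log (norm_pos_iff.mpr (hz0 k))).symm⟩

theorem norm_ofReal_norm_div_mul_le (a z : ℂ) : ‖(‖a‖ : ℂ) / a * z‖ ≤ ‖z‖ := by
  rw [norm_mul, norm_div, Complex.norm_real, norm_norm]
  exact mul_le_of_le_one_left (norm_nonneg z) (div_self_le_one _)

theorem norm0_le_sum_norm_of_gzero_eq_zero {n : ℕ} {v z : Fin n → ℂ} (hz : gzero v z = 0) :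
    norm0 v ≤ ∑ k, ‖z k‖ := by
  rcases eq_or_ne (norm0 v) 0 with hN | hN
  · rw [hN]
    positivity
  have hsum : ∑ k, (‖v k‖ : ℂ) / v k * z k = norm0 v := by
    have hN' : (norm0 v : ℂ) ≠ 0 := by exact_mod_cast hN
    have hinv : (norm0 v : ℂ) * (1 / norm0 v) = 1 := mul_one_div_cancel hN'
    unfold gzero at hz
    linear_combination (-(norm0 v : ℂ)) * hz - (∑ k, (‖v k‖ : ℂ) / v k * z k) * hinv
  calc norm0 v ≤ ‖(norm0 v : ℂ)‖ := (Complex.norm_real _).symm ▸ Real.le_norm_self _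
    _ = ‖∑ k, (‖v k‖ : ℂ) / v k * z k‖ := by rw [hsum]
    _ ≤ ∑ k, ‖(‖v k‖ : ℂ) / v k * z k‖ := norm_sum_le _ _
    _ ≤ ∑ k, ‖z k‖ := sum_le_sum fun k _ => norm_ofReal_norm_div_mul_le _ _

theorem mul_norm_le_of_gj_eq_zero {n : ℕ} {v z : Fin n → ℂ} {j : Fin n} (hvj : v j ≠ 0)
    (hz : gj v j z = 0) : (1 + norm0 v) * ‖z j‖ ≤ ‖v j‖ * (1 + ∑ k, ‖z k‖) := by
  have hvj' : 0 < ‖v j‖ := norm_pos_iff.mpr hvj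
  have hcoef : ‖v j‖ ≤ norm0 v :=
    single_le_sum (f := fun k => ‖v k‖) (fun k _ => norm_nonneg _) (mem_univ j)
  have hlhs : ‖((1 + norm0 v - ‖v j‖ : ℝ) : ℂ) / v j * z j‖
      = (1 + norm0 v - ‖v j‖) / ‖v j‖ * ‖z j‖ := by
    rw [norm_mul, norm_div, Complex.norm_real, Real.norm_of_nonneg (by linarith)]
  have hrest : ‖(1 : ℂ) + ∑ k ∈ univ.erase j, (‖v k‖ : ℂ) / v k * z k‖
      ≤ 1 + ∑ k ∈ univ.erase j, ‖z k‖ :=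
    calc _ ≤ ‖(1 : ℂ)‖ + ∑ k ∈ univ.erase j, ‖(‖v k‖ : ℂ) / v k * z k‖ :=
          (norm_add_le _ _).trans (add_le_add le_rfl (norm_sum_le _ _))
      _ ≤ 1 + ∑ k ∈ univ.erase j, ‖z k‖ := by
          rw [norm_one]
          gcongr with k
          exact norm_ofReal_norm_div_mul_le _ _
  have hsolve : ((1 + norm0 v - ‖v j‖ : ℝ) : ℂ) / v j * z j
      = 1 + ∑ k ∈ univ.erase j, (‖v k‖ : ℂ) / v k * z k := by
    unfold gj at hz
    linear_combination -hz
  rw [← hsolve, hlhs, sum_erase_eq_sub (mem_univ j), div_mul_eq_mul_div,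
    div_le_iff₀ hvj'] at hrest
  linarith

theorem eq_of_sum_le_of_forall_mul_le {ι : Type*} [Fintype ι] {a r : ι → ℝ}
    (ha : 0 ≤ ∑ i, a i) (hsum : ∑ i, a i ≤ ∑ i, r i)
    (h : ∀ j, (1 + ∑ i, a i) * r j ≤ a j * (1 + ∑ i, r i)) : r = a := by
  set A := ∑ i, a i
  set R := ∑ i, r i
  have hRA : R = A := by
    have hsummed : (1 + A) * R ≤ A * (1 + R) := by
      simpa only [← mul_sum, ← sum_mul] using sum_le_sum fun j (_ : j ∈ univ) => h j
    linarith
  have hle : ∀ j ∈ univ, r j ≤ a j := fun j _ =>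
    le_of_mul_le_mul_left ((h j).trans_eq (by rw [hRA, mul_comm])) (by linarith : 0 < 1 + A)
  funext j
  exact (sum_eq_sum_iff_of_le hle).mp hRA j (mem_univ j)

theorem exists_amoeba_avoiding {n : ℕ} (v : Fin n → ℂ) (hv : ∀ k, v k ≠ 0)
    (w : Fin n → ℝ) (hw : w ≠ Log v) :
    ∃ j : Fin (n + 1), w ∉ amoeba (gfam v j) := by
  by_contra! hmem
  apply hw
  have hN : norm0 v ≤ ∑ k, Real.exp (w k) := by
    obtain ⟨z, hz, hnorm⟩ := exists_norm_eq_exp_of_mem_amoeba (hmem 0)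
    simpa only [hnorm] using norm0_le_sum_norm_of_gzero_eq_zero hz
  have hj : ∀ j, (1 + norm0 v) * Real.exp (w j) ≤ ‖v j‖ * (1 + ∑ k, Real.exp (w k)) := by
    intro j
    obtain ⟨z, hz, hnorm⟩ := exists_norm_eq_exp_of_mem_amoeba (hmem j.succ)
    simpa only [hnorm] using mul_norm_le_of_gj_eq_zero (hv j) hz
  have hexp : (fun k => Real.exp (w k)) = fun k => ‖v k‖ :=
    eq_of_sum_le_of_forall_mul_le (by positivity) hN hj
  funext k
  rw [Log, ← congrFun hexp k, Real.log_exp]
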